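/- Convolution bounds (Lemma 3.2). Let d ≥ 1 and let a ≥ b > 0. Let f, g: ℤ^d → ℝ and c₁, c₂ > 0 satisfy 0 ≤ f(x) ≤ c₁(1+|x|)^{−a} and 0 ≤ g(x) ≤ c₂(1+|x|)^{−b} for all x ∈ ℤ^d. Then there exists c₃ > 0 (depending on d, a, b, c₁, c₂) such that for all x ∈ ℤ^d: (i) if a > d, then (f∗g)(x) := ∑_{y ∈ ℤ^d} f(y) g(x−y) ≤ c₃ (1+|x|)^{−b}; (ii) if a < d and a + b > d, then (f∗g)(x) ≤ c₃ (1+|x|)^{d−(a+b)}. -/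

import Mathlib

/-!
Write `⟨y⟩ = 1 + |y|`. Since `⟨x⟩ ≤ ⟨y⟩ + ⟨x - y⟩`, one of `⟨y⟩`, `⟨x - y⟩` is at least `⟨x⟩ / 2`,
and splitting the sum according to which one it is bounds `f ∗ g` by lattice sums of `⟨y⟩^(-s)`,
either over a ball `⟨y⟩ ≤ r` (when `s < d`) or over its complement (when `s > d`). Both are
`O(r^(d - s))`: cutting them into dyadic shells `2^j r ≤ ⟨y⟩ < 2^(j+1) r` leaves a geometric
series, since a ball of radius `r` contains at most `(2r)^d` lattice points. In case (i) the whole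
sum of `⟨y⟩^(-a)` is finite and the factor `⟨x - y⟩^(-b)` supplies the decay; in case (ii) the two
regions near `0` and near `x` give ball sums with exponents `a` and `b`, and the region far from
both gives a tail sum with exponent `a + b`. Only the triangle inequality and this growth of balls
enter, so the argument runs for any group carrying such a weight.
-/

open scoped ENNReal

abbrev Vtx (d : ℕ) := Fin d → ℤ

noncomputable def znorm {d : ℕ} (x : Vtx d) : ℝ :=
  Real.sqrt (∑ i, ((x i : ℝ)) ^ 2)

lemma ENNReal.tsum_ofReal_mul_pow {A q : ℝ} (hA : 0 ≤ A) (hq₀ : 0 ≤ q) (hq₁ : q < 1) :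
    ∑' j : ℕ, ENNReal.ofReal (A * q ^ j) = ENNReal.ofReal (A * (1 - q)⁻¹) := by
  rw [← ENNReal.ofReal_tsum_of_nonneg (fun j => by positivity)
    ((summable_geometric_of_lt_one hq₀ hq₁).mul_left A), tsum_mul_left,
    tsum_geometric_of_lt_one hq₀ hq₁]

lemma Real.mul_pow_rpow {q r : ℝ} (hq : 0 ≤ q) (hr : 0 ≤ r) (j : ℕ) (t : ℝ) :
    (q ^ j * r) ^ t = (q ^ t) ^ j * r ^ t := by
  rw [Real.mul_rpow (by positivity) hr, ← Real.rpow_natCast_mul hq, mul_comm (j : ℝ),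
    Real.rpow_mul_natCast hq]

lemma Real.div_two_rpow {x : ℝ} (hx : 0 ≤ x) (t : ℝ) : (x / 2) ^ t = 2 ^ (-t) * x ^ t := by
  rw [Real.div_rpow hx zero_le_two, Real.rpow_neg zero_le_two, div_eq_inv_mul]

lemma rpow_neg_mul_rpow_neg_le_mul_add {a b u v r : ℝ} (hb : 0 ≤ b) (hab : b ≤ a) (hu : 0 < u)
    (hv : 0 < v) (hr : 0 < r) (huv : 2 * r ≤ u + v) :
    u ^ (-a) * v ^ (-b) ≤ r ^ (-b) * (u ^ (-a) + v ^ (-a)) := by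
  have hua : 0 ≤ u ^ (-a) := by positivity
  have hva : 0 ≤ v ^ (-a) := by positivity
  have hrb : 0 ≤ r ^ (-b) := by positivity
  rcases le_or_gt r v with hrv | hvr
  · calc u ^ (-a) * v ^ (-b) ≤ u ^ (-a) * r ^ (-b) :=
          mul_le_mul_of_nonneg_left (Real.rpow_le_rpow_of_nonpos hr hrv (by linarith)) hua
      _ ≤ r ^ (-b) * (u ^ (-a) + v ^ (-a)) := by nlinarith
  · have hru : r ≤ u := by linarith
    calc u ^ (-a) * v ^ (-b) = u ^ (-b) * (u ^ (-(a - b)) * v ^ (-b)) := by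
          rw [← mul_assoc, ← Real.rpow_add hu]; ring_nf
      _ ≤ r ^ (-b) * (v ^ (-(a - b)) * v ^ (-b)) := by
          refine mul_le_mul (Real.rpow_le_rpow_of_nonpos hr hru (by linarith))
            (mul_le_mul_of_nonneg_right ?_ (by positivity)) (by positivity) hrb
          exact Real.rpow_le_rpow_of_nonpos hv (hvr.le.trans hru) (by linarith)
      _ = r ^ (-b) * v ^ (-a) := by rw [← Real.rpow_add hv]; ring_nf
      _ ≤ r ^ (-b) * (u ^ (-a) + v ^ (-a)) := by nlinarith

lemma rpow_neg_mul_rpow_neg_le_add_ite {a b u v r : ℝ} (ha : 0 ≤ a) (hb : 0 ≤ b) (hu : 0 < u)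
    (hv : 0 < v) (hr : 0 < r) (huv : 2 * r ≤ u + v) :
    u ^ (-a) * v ^ (-b) ≤
      r ^ (-b) * (if u ≤ r then u ^ (-a) else 0) + r ^ (-a) * (if v ≤ r then v ^ (-b) else 0) +
        (if r ≤ u then u ^ (-(a + b)) else 0) + (if r ≤ v then v ^ (-(a + b)) else 0) := by
  have hanti {p q : ℝ} (t : ℝ) (hp : 0 < p) (hpq : p ≤ q) (ht : 0 ≤ t) : q ^ (-t) ≤ p ^ (-t) :=
    Real.rpow_le_rpow_of_nonpos hp hpq (by linarith)
  have hrpow {w : ℝ} (hw : 0 < w) : w ^ (-a) * w ^ (-b) = w ^ (-(a + b)) := by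
    rw [← Real.rpow_add hw]; ring_nf
  have hterm₁ : 0 ≤ r ^ (-b) * (if u ≤ r then u ^ (-a) else 0) := by split_ifs <;> positivity
  have hterm₂ : 0 ≤ r ^ (-a) * (if v ≤ r then v ^ (-b) else 0) := by split_ifs <;> positivity
  have hterm₃ : 0 ≤ if r ≤ u then u ^ (-(a + b)) else 0 := by split_ifs <;> positivity
  have hterm₄ : 0 ≤ if r ≤ v then v ^ (-(a + b)) else 0 := by split_ifs <;> positivity
  have hua : 0 ≤ u ^ (-a) := by positivity
  rcases le_total u r with hur | hru
  · have : u ^ (-a) * v ^ (-b) ≤ r ^ (-b) * u ^ (-a) := by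
      rw [mul_comm]
      exact mul_le_mul_of_nonneg_right (hanti b hr (show r ≤ v by linarith) hb) hua
    rw [if_pos hur]; linarith
  rcases le_total v r with hvr | hrv
  · have : u ^ (-a) * v ^ (-b) ≤ r ^ (-a) * v ^ (-b) :=
      mul_le_mul_of_nonneg_right (hanti a hr hru ha) (by positivity)
    rw [if_pos hvr]; linarith
  rcases le_total u v with huv | hvu
  · have : u ^ (-a) * v ^ (-b) ≤ u ^ (-(a + b)) := by
      rw [← hrpow (hr.trans_le hru)]
      exact mul_le_mul_of_nonneg_left (hanti b (hr.trans_le hru) huv hb) hua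
    rw [if_pos hru]; linarith
  · have : u ^ (-a) * v ^ (-b) ≤ v ^ (-(a + b)) := by
      rw [← hrpow (hr.trans_le hrv)]
      exact mul_le_mul_of_nonneg_right (hanti a (hr.trans_le hrv) hvu ha) (by positivity)
    rw [if_pos hrv]; linarith

section AddGroup

variable {α : Type*} [AddGroup α]

lemma tsum_sub_left_eq {β : Type*} [AddCommMonoid β] [TopologicalSpace β] (x : α) (F : α → β) :
    ∑' y, F (x - y) = ∑' y, F y :=
  (Equiv.subLeft x).tsum_eq F

lemma tsum_ofReal_mul_sub_le {f g F G : α → ℝ} {c₁ c₂ K B : ℝ}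
    (hc : 0 ≤ c₁ * c₂) (hf : ∀ y, 0 ≤ f y ∧ f y ≤ c₁ * F y) (hg : ∀ y, 0 ≤ g y ∧ g y ≤ c₂ * G y)
    (x : α) (hK : ∑' y, ENNReal.ofReal (F y * G (x - y)) ≤ ENNReal.ofReal (K * B)) :
    ∑' y, ENNReal.ofReal (f y * g (x - y)) ≤ ENNReal.ofReal (c₁ * c₂ * K * B) := by
  calc ∑' y, ENNReal.ofReal (f y * g (x - y))
      ≤ ∑' y, ENNReal.ofReal (c₁ * c₂) * ENNReal.ofReal (F y * G (x - y)) := by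
        refine ENNReal.tsum_le_tsum fun y => ?_
        rw [← ENNReal.ofReal_mul hc]
        refine ENNReal.ofReal_le_ofReal ?_
        calc f y * g (x - y) ≤ c₁ * F y * (c₂ * G (x - y)) :=
              mul_le_mul (hf y).2 (hg _).2 (hg _).1 ((hf y).1.trans (hf y).2)
          _ = c₁ * c₂ * (F y * G (x - y)) := by ring
    _ ≤ ENNReal.ofReal (c₁ * c₂) * ENNReal.ofReal (K * B) := by
        rw [ENNReal.tsum_mul_left]; gcongr
    _ = ENNReal.ofReal (c₁ * c₂ * K * B) := by rw [← ENNReal.ofReal_mul hc, mul_assoc _ K]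

end AddGroup

def HasPolynomialGrowth {α : Type*} (ρ : α → ℝ) (C D : ℝ) : Prop :=
  ∀ r > 0, (∑' y, if ρ y ≤ r then (1 : ℝ≥0∞) else 0) ≤ ENNReal.ofReal (C * r ^ D)

namespace HasPolynomialGrowth

variable {α : Type*} {ρ : α → ℝ} {C D : ℝ}

lemma tsum_le_of_le_tsum_shells (h : HasPolynomialGrowth ρ C D) {F : α → ℝ≥0∞} {c R : ℕ → ℝ}
    (hc : ∀ j, 0 ≤ c j) (hR : ∀ j, 0 < R j)
    (hF : ∀ y, F y ≤ ∑' j, if ρ y ≤ R j then ENNReal.ofReal (c j) else 0) :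
    ∑' y, F y ≤ ∑' j, ENNReal.ofReal (c j * (C * R j ^ D)) :=
  calc ∑' y, F y ≤ ∑' y, ∑' j, if ρ y ≤ R j then ENNReal.ofReal (c j) else 0 :=
        ENNReal.tsum_le_tsum hF
    _ = ∑' j, ENNReal.ofReal (c j) * ∑' y, if ρ y ≤ R j then 1 else 0 := by
        rw [ENNReal.tsum_comm]
        simp_rw [← ENNReal.tsum_mul_left, mul_ite, mul_one, mul_zero]
    _ ≤ ∑' j, ENNReal.ofReal (c j) * ENNReal.ofReal (C * R j ^ D) :=
        ENNReal.tsum_le_tsum fun j => by gcongr; exact h _ (hR j)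
    _ = ∑' j, ENNReal.ofReal (c j * (C * R j ^ D)) := by
        simp_rw [ENNReal.ofReal_mul (hc _)]

lemma exists_tsum_tail_le (h : HasPolynomialGrowth ρ C D) (hC : 0 < C) {s : ℝ} (hs₀ : 0 ≤ s)
    (hDs : D < s) :
    ∃ K > 0, ∀ r > 0,
      ∑' y, ENNReal.ofReal (if r ≤ ρ y then ρ y ^ (-s) else 0) ≤
        ENNReal.ofReal (K * r ^ (D - s)) := by
  have hq : (2 : ℝ) ^ (D - s) < 1 := Real.rpow_lt_one_of_one_lt_of_neg one_lt_two (by linarith)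
  refine ⟨C * 2 ^ D * (1 - 2 ^ (D - s))⁻¹, by have := sub_pos.2 hq; positivity, fun r hr => ?_⟩
  calc _ ≤ ∑' j : ℕ, ENNReal.ofReal ((2 ^ j * r) ^ (-s) * (C * (2 ^ j * (2 * r)) ^ D)) := by
        refine h.tsum_le_of_le_tsum_shells (fun j => by positivity) (fun j => by positivity)
          fun y => ?_
        split_ifs with hy
        · obtain ⟨j, hj, hj'⟩ := exists_nat_pow_near ((one_le_div hr).2 hy) one_lt_two
          rw [le_div_iff₀ hr] at hj
          rw [div_lt_iff₀ hr] at hj'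
          refine le_trans ?_ (ENNReal.le_tsum j)
          rw [if_pos (by rw [pow_succ] at hj'; linarith)]
          exact ENNReal.ofReal_le_ofReal
            (Real.rpow_le_rpow_of_nonpos (by positivity) hj (by linarith))
        · simp
    _ = ∑' j : ℕ, ENNReal.ofReal (C * 2 ^ D * r ^ (D - s) * (2 ^ (D - s)) ^ j) := by
        refine tsum_congr fun j => congrArg ENNReal.ofReal ?_
        rw [Real.mul_pow_rpow zero_le_two hr.le, Real.mul_pow_rpow zero_le_two (by positivity),
          Real.mul_rpow zero_le_two hr.le, Real.rpow_sub hr, Real.rpow_sub zero_lt_two,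
          Real.rpow_neg hr.le, Real.rpow_neg zero_le_two]
        field_simp
        rw [div_pow, div_pow, one_pow]
        ring
    _ = ENNReal.ofReal (C * 2 ^ D * (1 - 2 ^ (D - s))⁻¹ * r ^ (D - s)) := by
        rw [ENNReal.tsum_ofReal_mul_pow (by positivity) (by positivity) hq]
        ring_nf

lemma exists_tsum_ball_le (h : HasPolynomialGrowth ρ C D) (hC : 0 < C) (hρ : ∀ y, 0 < ρ y)
    {s : ℝ} (hs₀ : 0 ≤ s) (hsD : s < D) :
    ∃ K > 0, ∀ r > 0,
      ∑' y, ENNReal.ofReal (if ρ y ≤ r then ρ y ^ (-s) else 0) ≤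
        ENNReal.ofReal (K * r ^ (D - s)) := by
  have hq : (2 : ℝ) ^ (s - D) < 1 := Real.rpow_lt_one_of_one_lt_of_neg one_lt_two (by linarith)
  refine ⟨C * 2 ^ s * (1 - 2 ^ (s - D))⁻¹, by have := sub_pos.2 hq; positivity, fun r hr => ?_⟩
  calc _ ≤ ∑' j : ℕ, ENNReal.ofReal ((2⁻¹ ^ j * (r / 2)) ^ (-s) * (C * (2⁻¹ ^ j * r) ^ D)) := by
        refine h.tsum_le_of_le_tsum_shells (fun j => by positivity) (fun j => by positivity)
          fun y => ?_
        split_ifs with hy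
        · have hρy := hρ y
          obtain ⟨j, hj, hj'⟩ := exists_nat_pow_near ((one_le_div hρy).2 hy) one_lt_two
          rw [le_div_iff₀ hρy] at hj
          rw [div_lt_iff₀ hρy] at hj'
          refine le_trans ?_ (ENNReal.le_tsum j)
          rw [if_pos (by rw [inv_pow, le_inv_mul_iff₀ (by positivity)]; exact hj)]
          refine ENNReal.ofReal_le_ofReal
            (Real.rpow_le_rpow_of_nonpos (by positivity) ?_ (by linarith))
          rw [inv_pow, inv_mul_le_iff₀ (by positivity)]
          rw [pow_succ] at hj'
          linarith
        · simp
    _ = ∑' j : ℕ, ENNReal.ofReal (C * 2 ^ s * r ^ (D - s) * (2 ^ (s - D)) ^ j) := by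
        refine tsum_congr fun j => congrArg ENNReal.ofReal ?_
        rw [Real.mul_pow_rpow (by norm_num) (by positivity),
          Real.mul_pow_rpow (by norm_num) hr.le, Real.div_rpow hr.le zero_le_two,
          Real.rpow_sub hr, Real.rpow_sub zero_lt_two, Real.inv_rpow zero_le_two,
          Real.inv_rpow zero_le_two, Real.rpow_neg zero_le_two, Real.rpow_neg hr.le]
        field_simp
        rw [div_pow, div_pow, one_pow]
        ring
    _ = ENNReal.ofReal (C * 2 ^ s * (1 - 2 ^ (s - D))⁻¹ * r ^ (D - s)) := by
        rw [ENNReal.tsum_ofReal_mul_pow (by positivity) (by positivity) hq]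
        ring_nf

section AddGroup

variable [AddGroup α]

theorem exists_tsum_conv_le_of_lt (h : HasPolynomialGrowth ρ C D) (hC : 0 < C)
    (hρ : ∀ y, 1 ≤ ρ y) (htri : ∀ x y, ρ x ≤ ρ y + ρ (x - y)) {a b : ℝ} (hb : 0 ≤ b)
    (hab : b ≤ a) (hDa : D < a) :
    ∃ K > 0, ∀ x, ∑' y, ENNReal.ofReal (ρ y ^ (-a) * ρ (x - y) ^ (-b)) ≤
      ENNReal.ofReal (K * ρ x ^ (-b)) := by
  obtain ⟨K, hK, htail⟩ := h.exists_tsum_tail_le hC (by linarith) hDa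
  have hsum : ∑' y, ENNReal.ofReal (ρ y ^ (-a)) ≤ ENNReal.ofReal K := by
    simpa [hρ] using htail 1 one_pos
  refine ⟨2 ^ b * (2 * K), by positivity, fun x => ?_⟩
  have hρ₀ : ∀ y, 0 ≤ ρ y := fun y => zero_le_one.trans (hρ y)
  have hρx : 0 < ρ x / 2 := by linarith [hρ x]
  calc ∑' y, ENNReal.ofReal (ρ y ^ (-a) * ρ (x - y) ^ (-b))
      ≤ ∑' y, ENNReal.ofReal ((ρ x / 2) ^ (-b)) *
          (ENNReal.ofReal (ρ y ^ (-a)) + ENNReal.ofReal (ρ (x - y) ^ (-a))) := by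
        refine ENNReal.tsum_le_tsum fun y => ?_
        rw [← ENNReal.ofReal_add (Real.rpow_nonneg (hρ₀ _) _) (Real.rpow_nonneg (hρ₀ _) _),
          ← ENNReal.ofReal_mul (by positivity)]
        exact ENNReal.ofReal_le_ofReal <| rpow_neg_mul_rpow_neg_le_mul_add hb hab
          (by linarith [hρ y]) (by linarith [hρ (x - y)]) hρx (by linarith [htri x y])
    _ = ENNReal.ofReal ((ρ x / 2) ^ (-b)) * (2 * ∑' y, ENNReal.ofReal (ρ y ^ (-a))) := by
        rw [ENNReal.tsum_mul_left, ENNReal.tsum_add,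
          tsum_sub_left_eq x fun y => ENNReal.ofReal (ρ y ^ (-a)), two_mul]
    _ ≤ ENNReal.ofReal ((ρ x / 2) ^ (-b)) * (2 * ENNReal.ofReal K) := by gcongr
    _ = ENNReal.ofReal (2 ^ b * (2 * K) * ρ x ^ (-b)) := by
        rw [← ENNReal.ofReal_ofNat 2, ← ENNReal.ofReal_mul zero_le_two,
          ← ENNReal.ofReal_mul (by positivity), Real.div_two_rpow (by linarith [hρ x]), neg_neg]
        ring_nf

theorem exists_tsum_conv_le_of_lt_add (h : HasPolynomialGrowth ρ C D) (hC : 0 < C)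
    (hρ : ∀ y, 0 < ρ y) (htri : ∀ x y, ρ x ≤ ρ y + ρ (x - y)) {a b : ℝ} (ha : 0 ≤ a)
    (hb : 0 ≤ b) (haD : a < D) (hbD : b < D) (hDab : D < a + b) :
    ∃ K > 0, ∀ x, ∑' y, ENNReal.ofReal (ρ y ^ (-a) * ρ (x - y) ^ (-b)) ≤
      ENNReal.ofReal (K * ρ x ^ (D - (a + b))) := by
  obtain ⟨Ka, hKa, hball_a⟩ := h.exists_tsum_ball_le hC hρ ha haD
  obtain ⟨Kb, hKb, hball_b⟩ := h.exists_tsum_ball_le hC hρ hb hbD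
  obtain ⟨Kt, hKt, htail⟩ := h.exists_tsum_tail_le hC (by linarith) hDab
  refine ⟨2 ^ (-(D - (a + b))) * (Ka + Kb + 2 * Kt), by positivity, fun x => ?_⟩
  set r := ρ x / 2 with hr_def
  have hr : 0 < r := half_pos (hρ x)
  set B : ℝ → α → ℝ≥0∞ := fun s y => ENNReal.ofReal (if ρ y ≤ r then ρ y ^ (-s) else 0)
  set T : α → ℝ≥0∞ := fun y => ENNReal.ofReal (if r ≤ ρ y then ρ y ^ (-(a + b)) else 0)
  calc ∑' y, ENNReal.ofReal (ρ y ^ (-a) * ρ (x - y) ^ (-b))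
      ≤ ∑' y, (ENNReal.ofReal (r ^ (-b)) * B a y + ENNReal.ofReal (r ^ (-a)) * B b (x - y) +
          T y + T (x - y)) := by
        refine ENNReal.tsum_le_tsum fun y => ?_
        rw [← ENNReal.ofReal_mul (by positivity), ← ENNReal.ofReal_mul (by positivity)]
        refine (ENNReal.ofReal_le_ofReal (rpow_neg_mul_rpow_neg_le_add_ite ha hb (hρ y) (hρ (x - y))
          hr (by rw [hr_def]; linarith [htri x y]))).trans ?_
        exact ENNReal.ofReal_add_le.trans (add_le_add_left (ENNReal.ofReal_add_le.trans
          (add_le_add_left ENNReal.ofReal_add_le _)) _)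
    _ = ENNReal.ofReal (r ^ (-b)) * ∑' y, B a y + ENNReal.ofReal (r ^ (-a)) * ∑' y, B b y +
          ∑' y, T y + ∑' y, T y := by
        rw [ENNReal.tsum_add, ENNReal.tsum_add, ENNReal.tsum_add, ENNReal.tsum_mul_left,
          ENNReal.tsum_mul_left, tsum_sub_left_eq x (B b), tsum_sub_left_eq x T]
    _ ≤ ENNReal.ofReal (r ^ (-b)) * ENNReal.ofReal (Ka * r ^ (D - a)) +
          ENNReal.ofReal (r ^ (-a)) * ENNReal.ofReal (Kb * r ^ (D - b)) +
          ENNReal.ofReal (Kt * r ^ (D - (a + b))) + ENNReal.ofReal (Kt * r ^ (D - (a + b))) := by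
        gcongr
        exacts [hball_a r hr, hball_b r hr, htail r hr, htail r hr]
    _ = ENNReal.ofReal ((Ka + Kb + 2 * Kt) * r ^ (D - (a + b))) := by
        rw [← ENNReal.ofReal_mul (by positivity), ← ENNReal.ofReal_mul (by positivity),
          ← ENNReal.ofReal_add (by positivity) (by positivity),
          ← ENNReal.ofReal_add (by positivity) (by positivity),
          ← ENNReal.ofReal_add (by positivity) (by positivity)]
        congr 1
        rw [show D - a = b + (D - (a + b)) by ring, show D - b = a + (D - (a + b)) by ring,
          Real.rpow_add hr, Real.rpow_add hr, Real.rpow_neg hr.le, Real.rpow_neg hr.le]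
        field_simp
        ring
    _ = ENNReal.ofReal (2 ^ (-(D - (a + b))) * (Ka + Kb + 2 * Kt) * ρ x ^ (D - (a + b))) := by
        rw [hr_def, Real.div_two_rpow (hρ x).le]
        ring_nf

end AddGroup

end HasPolynomialGrowth

lemma abs_le_znorm {d : ℕ} (y : Vtx d) (i : Fin d) : |(y i : ℝ)| ≤ znorm y :=
  Real.abs_le_sqrt (Finset.single_le_sum (f := fun j => ((y j : ℝ)) ^ 2)
    (fun _ _ => sq_nonneg _) (Finset.mem_univ i))

lemma znorm_eq_norm {d : ℕ} (y : Vtx d) : znorm y = ‖WithLp.toLp 2 fun i => (y i : ℝ)‖ := by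
  simp [znorm, EuclideanSpace.norm_eq]

lemma znorm_le_add_znorm_sub {d : ℕ} (x y : Vtx d) : znorm x ≤ znorm y + znorm (x - y) := by
  have hsplit : (WithLp.toLp 2 fun i => (x i : ℝ)) =
      (WithLp.toLp 2 fun i => (y i : ℝ)) + WithLp.toLp 2 fun i => ((x - y) i : ℝ) := by
    ext i; simp
  rw [znorm_eq_norm, znorm_eq_norm, znorm_eq_norm, hsplit]
  exact norm_add_le _ _

lemma hasPolynomialGrowth_one_add_znorm (d : ℕ) :
    HasPolynomialGrowth (fun y : Vtx d => 1 + znorm y) (2 ^ d) d := by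
  intro r hr
  set n := ⌊r - 1⌋
  set S : Finset (Vtx d) := Fintype.piFinset fun _ => Finset.Icc (-n) n
  have hS : ∀ y : Vtx d, 1 + znorm y ≤ r → y ∈ S := by
    intro y hy
    refine Fintype.mem_piFinset.2 fun i => Finset.mem_Icc.2 (abs_le.1 ?_)
    rw [Int.le_floor, Int.cast_abs]
    linarith [abs_le_znorm y i]
  have hcard : ((2 * n + 1).toNat : ℝ) ≤ 2 * r := by
    rw [← Int.cast_natCast, Int.toNat_eq_max]
    push_cast
    exact max_le (by linarith [Int.floor_le (r - 1)]) (by positivity)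
  calc (∑' y : Vtx d, if 1 + znorm y ≤ r then (1 : ℝ≥0∞) else 0)
      ≤ ∑' y : Vtx d, if y ∈ S then 1 else 0 :=
        ENNReal.tsum_le_tsum fun y => by
          split_ifs <;> simp_all
    _ = S.card := by
        rw [tsum_eq_sum (s := S) fun y hy => if_neg hy, Finset.sum_boole,
          Finset.filter_mem_eq_inter, Finset.inter_self]
    _ = ENNReal.ofReal (((2 * n + 1).toNat : ℝ) ^ d) := by
        simp [S, Fintype.card_piFinset, Int.card_Icc]
        ring_nf
    _ ≤ ENNReal.ofReal (2 ^ d * r ^ (d : ℝ)) := by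
        rw [Real.rpow_natCast, ← mul_pow]
        exact ENNReal.ofReal_le_ofReal (pow_le_pow_left₀ (Nat.cast_nonneg _) hcard d)

theorem convolution_bounds_general
    (d : ℕ) (a b : ℝ) (hb : 0 < b) (hab : b ≤ a)
    (c₁ c₂ : ℝ) (hc₁ : 0 < c₁) (hc₂ : 0 < c₂) :
    ∃ c₃ : ℝ, 0 < c₃ ∧
      ∀ f g : Vtx d → ℝ,
        (∀ x : Vtx d, 0 ≤ f x ∧ f x ≤ c₁ * (1 + znorm x) ^ (-a)) →
        (∀ x : Vtx d, 0 ≤ g x ∧ g x ≤ c₂ * (1 + znorm x) ^ (-b)) →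
        ∀ x : Vtx d,
          ((d : ℝ) < a →
            (∑' y : Vtx d, ENNReal.ofReal (f y * g (x - y))) ≤
              ENNReal.ofReal (c₃ * (1 + znorm x) ^ (-b))) ∧
          (a < (d : ℝ) → (d : ℝ) < a + b →
            (∑' y : Vtx d, ENNReal.ofReal (f y * g (x - y))) ≤
              ENNReal.ofReal (c₃ * (1 + znorm x) ^ ((d : ℝ) - (a + b)))) := by
  have hgrowth := hasPolynomialGrowth_one_add_znorm d
  have hρ : ∀ y : Vtx d, 1 ≤ 1 + znorm y := fun y => le_add_of_nonneg_right (Real.sqrt_nonneg _)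
  have htri : ∀ x y : Vtx d, 1 + znorm x ≤ 1 + znorm y + (1 + znorm (x - y)) := fun x y => by
    linarith [znorm_le_add_znorm_sub x y]
  rcases lt_or_ge (d : ℝ) a with hda | had
  · obtain ⟨K, hK, hconv⟩ :=
      hgrowth.exists_tsum_conv_le_of_lt (by positivity) hρ htri hb.le hab hda
    refine ⟨c₁ * c₂ * K, by positivity, fun f g hf hg x => ⟨fun _ => ?_, fun h => ?_⟩⟩
    · exact tsum_ofReal_mul_sub_le (by positivity) hf hg x (hconv x)
    · exact absurd h hda.not_gt
  by_cases hii : a < d ∧ (d : ℝ) < a + b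
  · obtain ⟨had, hdab⟩ := hii
    obtain ⟨K, hK, hconv⟩ := hgrowth.exists_tsum_conv_le_of_lt_add (by positivity)
      (fun y => zero_lt_one.trans_le (hρ y)) htri (hb.le.trans hab) hb.le had
      (hab.trans_lt had) hdab
    refine ⟨c₁ * c₂ * K, by positivity, fun f g hf hg x => ⟨fun h => ?_, fun _ _ => ?_⟩⟩
    · exact absurd h had.not_gt
    · exact tsum_ofReal_mul_sub_le (by positivity) hf hg x (hconv x)
  · exact ⟨1, one_pos, fun _ _ _ _ _ =>
      ⟨fun h => absurd h had.not_gt, fun h h' => absurd ⟨h, h'⟩ hii⟩⟩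

/-- **Convolution bounds** (Lemma 3.2).
Let `a ≥ b > 0` and let `f, g : ℤ^d → ℝ` satisfy `0 ≤ f(x) ≤ c₁(1+|x|)^{−a}` and
`0 ≤ g(x) ≤ c₂(1+|x|)^{−b}`.  Then there is `c₃ = c₃(d, a, b, c₁, c₂) > 0` such that
(i) if `a > d` then `(f∗g)(x) ≤ c₃ (1+|x|)^{−b}`, and
(ii) if `a < d` and `a + b > d` then `(f∗g)(x) ≤ c₃ (1+|x|)^{d−(a+b)}`. -/
theorem convolution_bounds
    (d : ℕ) (hd : 1 ≤ d) (a b : ℝ) (hb : 0 < b) (hab : b ≤ a)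
    (c₁ c₂ : ℝ) (hc₁ : 0 < c₁) (hc₂ : 0 < c₂) :
    ∃ c₃ : ℝ, 0 < c₃ ∧
      ∀ f g : Vtx d → ℝ,
        (∀ x : Vtx d, 0 ≤ f x ∧ f x ≤ c₁ * (1 + znorm x) ^ (-a)) →
        (∀ x : Vtx d, 0 ≤ g x ∧ g x ≤ c₂ * (1 + znorm x) ^ (-b)) →
        ∀ x : Vtx d,
          ((d : ℝ) < a →
            (∑' y : Vtx d, ENNReal.ofReal (f y * g (x - y))) ≤
              ENNReal.ofReal (c₃ * (1 + znorm x) ^ (-b))) ∧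
          (a < (d : ℝ) → (d : ℝ) < a + b →
            (∑' y : Vtx d, ENNReal.ofReal (f y * g (x - y))) ≤
              ENNReal.ofReal (c₃ * (1 + znorm x) ^ ((d : ℝ) - (a + b)))) :=
  convolution_bounds_general d a b hb hab c₁ c₂ hc₁ hc₂
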